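/- Let {Y_n}_{n≥1} and {X_{n,k}}_{n,k≥1} be real-valued random variables defined on a common probability space, all with mean zero and finite variance. Assume: (i) for each k there is σ_k² ≥ 0 such that, as n → ∞, X_{n,k} converges in distribution to N(0, σ_k²) and Var[X_{n,k}] → σ_k²; (ii) lim_{k→∞} limsup_{n→∞} Var[X_{n,k} − Y_n] = 0. Then the limit σ² := lim_{k→∞} σ_k² exists, and Y_n converges in distribution to N(0, σ²) as n → ∞. -/

import Mathlib

/-!
Since `√Var` is a seminorm on `L²`, comparing `X n k` and `X n K` with `Y n` at a common time `n`
shows that the standard deviations `√σk2 k` form a Cauchy sequence; let `σ2` be the square of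
their limit. By Chebyshev's inequality, `Var[X n k - Y n] ≤ ε³` puts the laws of `X n k` and `Y n`
within Lévy–Prokhorov distance `ε`. Since this distance metrizes convergence in distribution, the
triangle inequality through `law (X n k)` and `N(0, σk2 k)` gives `law (Y n) → N(0, σ2)`.
-/

open MeasureTheory Filter ProbabilityTheory Metric Topology NNReal BoundedContinuousFunction

section Approximation

variable {α ι : Type*} [PseudoMetricSpace α] {l : Filter ι} {a : ι → ℕ → α} {b : ℕ → α}
  {c : ι → α}

theorem cauchySeq_of_forall_eventually_dist_le [l.NeBot]
    (hab : ∀ k, Tendsto (fun n ↦ a n k) l (𝓝 (b k)))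
    (hca : ∀ ε > 0, ∀ᶠ k in atTop, ∀ᶠ n in l, dist (c n) (a n k) ≤ ε) :
    CauchySeq b := by
  refine Metric.cauchySeq_iff'.2 fun ε hε ↦ ?_
  obtain ⟨K, hK⟩ := eventually_atTop.1 (hca (ε / 4) (by positivity))
  refine ⟨K, fun k hk ↦ ?_⟩
  have hb : ∀ j, ∀ᶠ n in l, dist (a n j) (b j) < ε / 4 :=
    fun j ↦ Metric.tendsto_nhds.1 (hab j) _ (by positivity)
  obtain ⟨n, hk₁, hK₁, hk₂, hK₂⟩ :=
    ((hK k hk).and ((hK K le_rfl).and ((hb k).and (hb K)))).exists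
  calc dist (b k) (b K)
      ≤ dist (b k) (a n k) + dist (a n k) (c n) + dist (c n) (a n K) + dist (a n K) (b K) :=
        (dist_triangle4 _ _ _ _).trans (by gcongr; exact dist_triangle _ _ _)
    _ < ε := by rw [dist_comm (b k), dist_comm (a n k) (c n)]; linarith

theorem tendsto_of_forall_eventually_dist_le {x : α}
    (hab : ∀ k, Tendsto (fun n ↦ a n k) l (𝓝 (b k))) (hb : Tendsto b atTop (𝓝 x))
    (hca : ∀ ε > 0, ∀ᶠ k in atTop, ∀ᶠ n in l, dist (c n) (a n k) ≤ ε) :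
    Tendsto c l (𝓝 x) := by
  refine Metric.tendsto_nhds.2 fun ε hε ↦ ?_
  obtain ⟨k, hck, hbk⟩ :=
    ((hca (ε / 3) (by positivity)).and
      (Metric.tendsto_nhds.1 hb (ε / 3) (by positivity))).exists
  filter_upwards [hck, Metric.tendsto_nhds.1 (hab k) (ε / 3) (by positivity)] with n hcn han
  calc dist (c n) x ≤ dist (c n) (a n k) + dist (a n k) (b k) + dist (b k) x :=
        dist_triangle4 _ _ _ _
    _ < ε := by linarith

end Approximation

section Variance

variable {Ω : Type*} [MeasurableSpace Ω] {P : Measure Ω}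

theorem evariance_eq_eLpNorm_sq (X : Ω → ℝ) :
    evariance X P = eLpNorm (X - fun _ ↦ P[X]) 2 P ^ 2 := by
  have h := eLpNorm_nnreal_pow_eq_lintegral (μ := P) (f := X - fun _ ↦ P[X]) (p := 2) two_ne_zero
  norm_num at h
  rw [evariance, h]

variable [IsFiniteMeasure P]

theorem sqrt_variance_eq_norm_toLp {X : Ω → ℝ} (hX : MemLp X 2 P) :
    √(Var[X; P]) = ‖(hX.sub (memLp_const P[X])).toLp‖ := by
  rw [Lp.norm_toLp, variance, evariance_eq_eLpNorm_sq, ENNReal.toReal_pow,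
    Real.sqrt_sq ENNReal.toReal_nonneg]

theorem abs_sqrt_variance_sub_sqrt_variance_le {X Y : Ω → ℝ} (hX : MemLp X 2 P)
    (hY : MemLp Y 2 P) : |√(Var[X; P]) - √(Var[Y; P])| ≤ √(Var[X - Y; P]) := by
  rw [sqrt_variance_eq_norm_toLp hX, sqrt_variance_eq_norm_toLp hY,
    sqrt_variance_eq_norm_toLp (hX.sub hY)]
  refine (abs_norm_sub_norm_le _ _).trans_eq ?_
  rw [← MemLp.toLp_sub]
  refine congrArg _ (MemLp.toLp_congr _ _ (ae_of_all _ fun ω ↦ ?_))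
  simp only [Pi.sub_apply, integral_sub (hX.integrable one_le_two) (hY.integrable one_le_two)]
  ring

end Variance

section LevyProkhorov

variable {Ω E : Type*} [MeasurableSpace Ω] {P : Measure Ω} [IsProbabilityMeasure P]

theorem levyProkhorovDist_map_le_of_measure_le [PseudoMetricSpace E] [MeasurableSpace E]
    [OpensMeasurableSpace E] {X Y : Ω → E} (hX : AEMeasurable X P) (hY : AEMeasurable Y P)
    {δ : ℝ} (hδ : 0 ≤ δ)
    (h : ∀ ε, δ < ε → P {ω | ε ≤ dist (X ω) (Y ω)} ≤ ENNReal.ofReal ε) :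
    levyProkhorovDist (P.map Y) (P.map X) ≤ δ := by
  have := Measure.isProbabilityMeasure_map hX
  have := Measure.isProbabilityMeasure_map hY
  refine levyProkhorovDist_le_of_forall_le _ _ hδ fun ε B hε hB ↦ ?_
  rw [Measure.map_apply_of_aemeasurable hY hB,
    Measure.map_apply_of_aemeasurable hX isOpen_thickening.measurableSet]
  have hcover : Y ⁻¹' B ⊆ X ⁻¹' thickening ε B ∪ {ω | ε ≤ dist (X ω) (Y ω)} := by
    intro ω hω
    by_cases hclose : dist (X ω) (Y ω) < ε
    · exact Or.inl (mem_thickening_iff.2 ⟨Y ω, hω, hclose⟩)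
    · exact Or.inr (not_lt.1 hclose)
  calc P (Y ⁻¹' B) ≤ P (X ⁻¹' thickening ε B ∪ {ω | ε ≤ dist (X ω) (Y ω)}) :=
        measure_mono hcover
    _ ≤ P (X ⁻¹' thickening ε B) + ENNReal.ofReal ε :=
        (measure_union_le _ _).trans (by gcongr; exact h ε hε)

theorem levyProkhorovDist_map_le_of_variance_sub_le {X Y : Ω → ℝ} (hX : MemLp X 2 P)
    (hY : MemLp Y 2 P) (hmean : P[X] = P[Y]) {δ : ℝ} (hδ : 0 ≤ δ)
    (hvar : Var[X - Y; P] ≤ δ ^ 3) :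
    levyProkhorovDist (P.map Y) (P.map X) ≤ δ := by
  refine levyProkhorovDist_map_le_of_measure_le hX.aemeasurable hY.aemeasurable hδ
    fun ε hε ↦ ?_
  have hε₀ : 0 < ε := hδ.trans_lt hε
  have hmean_sub : ∫ ω, (X - Y) ω ∂P = 0 := by
    simp only [Pi.sub_apply]
    rw [integral_sub (hX.integrable one_le_two) (hY.integrable one_le_two), hmean, sub_self]
  have hchebyshev := meas_ge_le_variance_div_sq (hX.sub hY) hε₀
  rw [hmean_sub] at hchebyshev
  simp only [sub_zero, Pi.sub_apply, ← Real.dist_eq] at hchebyshev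
  refine hchebyshev.trans (ENNReal.ofReal_le_ofReal ?_)
  rw [div_le_iff₀ (by positivity)]
  calc Var[X - Y; P] ≤ δ ^ 3 := hvar
    _ ≤ ε ^ 3 := by gcongr
    _ = ε * ε ^ 2 := by ring

end LevyProkhorov

theorem ProbabilityMeasure.tendsto_map_iff_forall_integral_tendsto {Ω E ι : Type*}
    [MeasurableSpace Ω] {P : Measure Ω} [IsProbabilityMeasure P] [TopologicalSpace E]
    [MeasurableSpace E] [OpensMeasurableSpace E] {l : Filter ι} {X : ι → Ω → E}
    (hX : ∀ i, AEMeasurable (X i) P) {μ : ProbabilityMeasure E} :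
    Tendsto (β := ProbabilityMeasure E)
      (fun i ↦ ⟨P.map (X i), Measure.isProbabilityMeasure_map (hX i)⟩) l (𝓝 μ) ↔
      ∀ g : E →ᵇ ℝ, Tendsto (fun i ↦ ∫ ω, g (X i ω) ∂P) l (𝓝 (∫ x, g x ∂(μ : Measure E))) := by
  refine ProbabilityMeasure.tendsto_iff_forall_integral_tendsto.trans (forall_congr' fun g ↦ ?_)
  simp only [ProbabilityMeasure.coe_mk, integral_map (hX _) g.continuous.aestronglyMeasurable]

theorem tendsto_gaussianReal {v : ℕ → ℝ≥0} {v₀ : ℝ≥0} (μ : ℝ) (hv : Tendsto v atTop (𝓝 v₀)) :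
    Tendsto (β := ProbabilityMeasure ℝ) (fun k ↦ ⟨gaussianReal μ (v k), inferInstance⟩) atTop
      (𝓝 ⟨gaussianReal μ v₀, inferInstance⟩) := by
  refine ProbabilityMeasure.tendsto_of_tendsto_charFun fun t ↦ ?_
  simp only [ProbabilityMeasure.coe_mk, charFun_gaussianReal]
  have hcont : Continuous fun s : ℝ≥0 ↦ Complex.exp (t * μ * Complex.I - s * t ^ 2 / 2) := by
    fun_prop
  exact (hcont.tendsto v₀).comp hv

theorem stmt_2_general
    (Ω : Type) [MeasurableSpace Ω] (P : Measure Ω) [IsProbabilityMeasure P]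
    (Y : ℕ → Ω → ℝ) (X : ℕ → ℕ → Ω → ℝ)
    (hYL2 : ∀ n, MemLp (Y n) 2 P) (hXL2 : ∀ n k, MemLp (X n k) 2 P)
    (hYmean : ∀ n, ∫ ω, Y n ω ∂P = 0) (hXmean : ∀ n k, ∫ ω, X n k ω ∂P = 0)
    (σk2 : ℕ → ℝ) (hσk2 : ∀ k, 0 ≤ σk2 k)
    (hdist : ∀ k, ∀ g : BoundedContinuousFunction ℝ ℝ,
      Tendsto (fun n : ℕ => ∫ ω, g (X n k ω) ∂P) atTop
        (nhds (∫ x, g x ∂(gaussianReal 0 ⟨σk2 k, hσk2 k⟩))))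
    (hvar : ∀ k, Tendsto (fun n : ℕ => variance (X n k) P) atTop (nhds (σk2 k)))
    (happrox : ∀ ε : ℝ, 0 < ε → ∃ K : ℕ, ∀ k ≥ K,
      ∀ᶠ n in atTop, variance (fun ω => X n k ω - Y n ω) P ≤ ε) :
    ∃ σ2 : ℝ, ∃ hσ2 : 0 ≤ σ2, Tendsto σk2 atTop (nhds σ2) ∧
      ∀ g : BoundedContinuousFunction ℝ ℝ,
        Tendsto (fun n : ℕ => ∫ ω, g (Y n ω) ∂P) atTop
          (nhds (∫ x, g x ∂(gaussianReal 0 ⟨σ2, hσ2⟩))) := by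
  have hclose : ∀ δ > 0, ∀ᶠ k in atTop, ∀ᶠ n in atTop, Var[X n k - Y n; P] ≤ δ :=
    fun δ hδ ↦ eventually_atTop.2 (happrox δ hδ)
  obtain ⟨s, hs⟩ : ∃ s, Tendsto (fun k ↦ √(σk2 k)) atTop (𝓝 s) := by
    refine cauchySeq_tendsto_of_complete (cauchySeq_of_forall_eventually_dist_le
      (a := fun n k ↦ √(Var[X n k; P])) (c := fun n ↦ √(Var[Y n; P]))
      (fun k ↦ (Real.continuous_sqrt.tendsto _).comp (hvar k)) fun ε hε ↦ ?_)
    filter_upwards [hclose (ε ^ 2) (by positivity)] with k hk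
    filter_upwards [hk] with n hn
    rw [Real.dist_eq, abs_sub_comm]
    exact (abs_sqrt_variance_sub_sqrt_variance_le (hXL2 n k) (hYL2 n)).trans
      ((Real.sqrt_le_sqrt hn).trans_eq (Real.sqrt_sq hε.le))
  have hσ : Tendsto σk2 atTop (𝓝 (s ^ 2)) := by
    simpa only [Real.sq_sqrt (hσk2 _)] using hs.pow 2
  refine ⟨s ^ 2, sq_nonneg s, hσ, ?_⟩
  let T := LevyProkhorov.probabilityMeasureHomeomorph (Ω := ℝ)
  refine (ProbabilityMeasure.tendsto_map_iff_forall_integral_tendsto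
    (μ := ⟨gaussianReal 0 ⟨s ^ 2, sq_nonneg s⟩, instIsProbabilityMeasureGaussianReal _ _⟩)
    fun n ↦ (hYL2 n).aemeasurable).1 (T.isInducing.tendsto_nhds_iff.2 ?_)
  refine tendsto_of_forall_eventually_dist_le
    (a := fun n k ↦ T ⟨P.map (X n k), Measure.isProbabilityMeasure_map (hXL2 n k).aemeasurable⟩)
    (b := fun k ↦ T ⟨gaussianReal 0 ⟨σk2 k, hσk2 k⟩, instIsProbabilityMeasureGaussianReal _ _⟩)
    (fun k ↦ (T.continuous.tendsto _).comp
      ((ProbabilityMeasure.tendsto_map_iff_forall_integral_tendsto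
        fun n ↦ (hXL2 n k).aemeasurable).2 (hdist k)))
    ((T.continuous.tendsto _).comp (tendsto_gaussianReal 0 (NNReal.tendsto_coe.1 hσ)))
    fun ε hε ↦ ?_
  filter_upwards [hclose (ε ^ 3) (by positivity)] with k hk
  filter_upwards [hk] with n hn
  exact levyProkhorovDist_map_le_of_variance_sub_le (hXL2 n k) (hYL2 n)
    ((hXmean n k).trans (hYmean n).symm) hε.le hn

/-- Lemma 2.2 of the paper (convergence in distribution part): if for each `k`,
`X n k` converges in distribution to `N(0, σk²)` with convergence of variances,
and `lim_k limsup_n Var[X n k - Y n] = 0`, then `σ² = lim_k σk²` exists and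
`Y n` converges in distribution to `N(0, σ²)`. -/
theorem stmt_2
    (Ω : Type) [MeasurableSpace Ω] (P : Measure Ω) [IsProbabilityMeasure P]
    (Y : ℕ → Ω → ℝ) (X : ℕ → ℕ → Ω → ℝ)
    (hYmeas : ∀ n, Measurable (Y n)) (hXmeas : ∀ n k, Measurable (X n k))
    (hYL2 : ∀ n, MemLp (Y n) 2 P) (hXL2 : ∀ n k, MemLp (X n k) 2 P)
    (hYmean : ∀ n, ∫ ω, Y n ω ∂P = 0) (hXmean : ∀ n k, ∫ ω, X n k ω ∂P = 0)
    (σk2 : ℕ → ℝ) (hσk2 : ∀ k, 0 ≤ σk2 k)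
    (hdist : ∀ k, ∀ g : BoundedContinuousFunction ℝ ℝ,
      Tendsto (fun n : ℕ => ∫ ω, g (X n k ω) ∂P) atTop
        (nhds (∫ x, g x ∂(gaussianReal 0 ⟨σk2 k, hσk2 k⟩))))
    (hvar : ∀ k, Tendsto (fun n : ℕ => variance (X n k) P) atTop (nhds (σk2 k)))
    (happrox : ∀ ε : ℝ, 0 < ε → ∃ K : ℕ, ∀ k ≥ K,
      ∀ᶠ n in atTop, variance (fun ω => X n k ω - Y n ω) P ≤ ε) :
    ∃ σ2 : ℝ, ∃ hσ2 : 0 ≤ σ2, Tendsto σk2 atTop (nhds σ2) ∧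
      ∀ g : BoundedContinuousFunction ℝ ℝ,
        Tendsto (fun n : ℕ => ∫ ω, g (Y n ω) ∂P) atTop
          (nhds (∫ x, g x ∂(gaussianReal 0 ⟨σ2, hσ2⟩))) :=
  stmt_2_general Ω P Y X hYL2 hXL2 hYmean hXmean σk2 hσk2 hdist hvar happrox
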